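/- arXiv:2204.03787 — 2 statements merged into one kernel-verified Lean document; each statement's English description precedes it below -/
import Mathlib

section
/- Let G be a connected graph, let e be an edge not in E(G), and let G̃ = G + e be the graph obtained by adding e. Then for every α ∈ [0,1), ρ(RD_α(G̃)) > ρ(RD_α(G)). -/
open Matrix BigOperators Finset

/-- The reciprocal distance (Harary) matrix of a graph. -/
noncomputable def RDmat {V : Type*} [Fintype V] [DecidableEq V] (G : SimpleGraph V) :
    Matrix V V ℝ :=
  Matrix.of fun i j => if i = j then 0 else (1 : ℝ) / (G.dist i j)

/-- The reciprocal transmission of a vertex. -/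
noncomputable def RTr {V : Type*} [Fintype V] [DecidableEq V] (G : SimpleGraph V) (v : V) : ℝ :=
  ∑ u ∈ Finset.univ.erase v, (1 : ℝ) / (G.dist u v)

/-- The generalized reciprocal distance matrix `RD_α(G) = α RT(G) + (1-α) RD(G)`. -/
noncomputable def RDalpha {V : Type*} [Fintype V] [DecidableEq V] (G : SimpleGraph V) (α : ℝ) :
    Matrix V V ℝ :=
  α • Matrix.diagonal (RTr G) + (1 - α) • RDmat G

/-- The `i`-th largest eigenvalue (1-indexed, with multiplicity) of a real matrix,
obtained from the roots of its characteristic polynomial sorted decreasingly. -/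
noncomputable def eigDesc {V : Type*} [Fintype V] [DecidableEq V] (M : Matrix V V ℝ) (i : ℕ) : ℝ :=
  ((M.charpoly.roots.sort (· ≤ ·)).reverse).getD (i - 1) 0

/-- The spectral radius (largest eigenvalue) of a real symmetric matrix. -/
noncomputable def specRadius {V : Type*} [Fintype V] [DecidableEq V] (M : Matrix V V ℝ) : ℝ :=
  eigDesc M 1

/-- The join of two graphs. -/
def gjoin {V₁ V₂ : Type*} (G₁ : SimpleGraph V₁) (G₂ : SimpleGraph V₂) :
    SimpleGraph (V₁ ⊕ V₂) where
  Adj x y := match x, y with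
    | Sum.inl a, Sum.inl b => G₁.Adj a b
    | Sum.inr a, Sum.inr b => G₂.Adj a b
    | Sum.inl _, Sum.inr _ => True
    | Sum.inr _, Sum.inl _ => True
  symm := ⟨by rintro (a|a) (b|b) h <;> first | exact G₁.adj_symm h | exact G₂.adj_symm h | trivial⟩
  loopless := ⟨by rintro (a|a) h <;> first | exact G₁.irrefl h | exact G₂.irrefl h⟩

/-!
The off-diagonal entries of `RD_α(G)` are positive, so by the Perron–Frobenius argument its
spectral radius is the Rayleigh quotient `xᵀ RD_α(G) x` of a positive unit vector `x`
(take `|w|` for a top unit eigenvector `w`). Adding the edge `uv` can only shorten distances,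
so no entry of `RD_α` decreases (on the diagonal this uses `α ≥ 0`), while the
`(u, v)` entry grows from `(1 - α) / d_G(u, v) ≤ (1 - α) / 2` to `1 - α`. Hence
`ρ(RD_α(G)) = xᵀ RD_α(G) x < xᵀ RD_α(G + e) x ≤ ρ(RD_α(G + e))`.
-/

namespace Matrix

variable {n : Type*} [Fintype n]

lemma dotProduct_mulVec_eq_sum_sum (A : Matrix n n ℝ) (x : n → ℝ) :
    x ⬝ᵥ (A *ᵥ x) = ∑ i, ∑ k, A i k * x i * x k := by
  simp only [dotProduct, mulVec, Finset.mul_sum]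
  exact Finset.sum_congr rfl fun i _ => Finset.sum_congr rfl fun k _ => by ring

lemma dotProduct_mulVec_lt_of_le_of_lt {A B : Matrix n n ℝ} {x : n → ℝ} (hx : ∀ i, 0 < x i)
    (hle : ∀ i j, A i j ≤ B i j) {u v : n} (hlt : A u v < B u v) :
    x ⬝ᵥ (A *ᵥ x) < x ⬝ᵥ (B *ᵥ x) := by
  have hterm : ∀ i k, A i k * x i * x k ≤ B i k * x i * x k := fun i k =>
    mul_le_mul_of_nonneg_right (mul_le_mul_of_nonneg_right (hle i k) (hx i).le) (hx k).le
  rw [dotProduct_mulVec_eq_sum_sum, dotProduct_mulVec_eq_sum_sum]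
  refine Finset.sum_lt_sum (fun i _ => Finset.sum_le_sum fun k _ => hterm i k)
    ⟨u, Finset.mem_univ u, Finset.sum_lt_sum (fun k _ => hterm u k) ⟨v, Finset.mem_univ v,
      mul_lt_mul_of_pos_right (mul_lt_mul_of_pos_right hlt (hx u)) (hx v)⟩⟩

lemma pos_of_mulVec_eq_smul {A : Matrix n n ℝ} (hA : ∀ i j, i ≠ j → 0 < A i j) {x : n → ℝ}
    {r : ℝ} (hAx : A *ᵥ x = r • x) (hx : ∀ i, 0 ≤ x i) (hx0 : x ≠ 0) (i : n) : 0 < x i := by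
  obtain ⟨k, hk⟩ : ∃ k, x k ≠ 0 := Function.ne_iff.mp hx0
  refine (hx i).lt_of_ne fun hi => ?_
  have hki : k ≠ i := by rintro rfl; exact hk hi.symm
  have hrow : ∑ m, A i m * x m = 0 := by
    simpa [← hi, mulVec, dotProduct] using congrFun hAx i
  have hterm : ∀ m ∈ Finset.univ, 0 ≤ A i m * x m := fun m _ => by
    rcases eq_or_ne i m with rfl | him
    · simp [← hi]
    · exact mul_nonneg (hA i m him).le (hx m)
  have := (Finset.sum_eq_zero_iff_of_nonneg hterm).mp hrow k (Finset.mem_univ k)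
  exact (mul_pos (hA i k hki.symm) ((hx k).lt_of_ne' hk)).ne' this

namespace IsHermitian

variable [DecidableEq n] {A B : Matrix n n ℝ}

lemma reverse_sort_roots_charpoly_eq_eigenvalues₀ (hA : A.IsHermitian) :
    (A.charpoly.roots.sort (· ≤ ·)).reverse = List.ofFn hA.eigenvalues₀ := by
  refine List.Perm.eq_of_sortedGE ?_ hA.eigenvalues₀_antitone.sortedGE_ofFn ?_
  · exact (List.sortedLE_iff_pairwise.mpr (Multiset.pairwise_sort _ _)).reverse
  · rw [← Multiset.coe_eq_coe, Multiset.coe_reverse, Multiset.sort_eq,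
      hA.roots_charpoly_eq_eigenvalues₀]
    simp [Fin.univ_val_map]

lemma specRadius_eq_eigenvalues₀_zero [Nonempty n] (hA : A.IsHermitian) :
    specRadius A = hA.eigenvalues₀ ⟨0, Fintype.card_pos⟩ := by
  rw [specRadius, eigDesc, hA.reverse_sort_roots_charpoly_eq_eigenvalues₀]
  simp [Fintype.card_pos]

lemma eigenvalues_le_specRadius (hA : A.IsHermitian) (i : n) :
    hA.eigenvalues i ≤ specRadius A := by
  have : Nonempty n := ⟨i⟩
  rw [hA.specRadius_eq_eigenvalues₀_zero]
  exact hA.eigenvalues₀_antitone (Fin.zero_le _)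

lemma exists_eigenvalues_eq_specRadius [Nonempty n] (hA : A.IsHermitian) :
    ∃ j, hA.eigenvalues j = specRadius A :=
  ⟨Fintype.equivOfCardEq (Fintype.card_fin _) ⟨0, Fintype.card_pos⟩, by
    simp [eigenvalues, hA.specRadius_eq_eigenvalues₀_zero]⟩

lemma posSemidef_specRadius_smul_one_sub (hA : A.IsHermitian) :
    (specRadius A • 1 - A).PosSemidef := by
  set ρ := specRadius A
  set U : Matrix n n ℝ := (hA.eigenvectorUnitary : Matrix n n ℝ)
  have hA_eq : A = U * diagonal hA.eigenvalues * star U := by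
    simpa only [Unitary.conjStarAlgAut_apply, RCLike.ofReal_real_eq_id, Function.id_comp]
      using hA.spectral_theorem
  have hUU : U * star U = 1 := Unitary.coe_mul_star_self hA.eigenvectorUnitary
  have hdiag : ρ • 1 - A = U * diagonal (fun i => ρ - hA.eigenvalues i) * star U := by
    have : diagonal (fun i => ρ - hA.eigenvalues i) = ρ • 1 - diagonal hA.eigenvalues := by
      ext i j; by_cases h : i = j <;> simp [h]
    rw [this, mul_sub, sub_mul, mul_smul_comm, mul_one, smul_mul_assoc, hUU, ← hA_eq]
  rw [hdiag]
  exact (posSemidef_diagonal_iff.mpr fun i => sub_nonneg.mpr (hA.eigenvalues_le_specRadius i))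
    |>.mul_mul_conjTranspose_same U

lemma dotProduct_mulVec_le_specRadius_mul (hA : A.IsHermitian) (x : n → ℝ) :
    x ⬝ᵥ (A *ᵥ x) ≤ specRadius A * (x ⬝ᵥ x) := by
  have := hA.posSemidef_specRadius_smul_one_sub.dotProduct_mulVec_nonneg x
  simp only [star_trivial, sub_mulVec, smul_mulVec, one_mulVec, dotProduct_sub,
    dotProduct_smul, smul_eq_mul] at this
  linarith

lemma mulVec_eq_specRadius_smul_of_dotProduct_mulVec_eq (hA : A.IsHermitian) {x : n → ℝ}
    (hx : x ⬝ᵥ (A *ᵥ x) = specRadius A * (x ⬝ᵥ x)) : A *ᵥ x = specRadius A • x := by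
  have := (hA.posSemidef_specRadius_smul_one_sub.dotProduct_mulVec_zero_iff x).mp <| by
    simp only [star_trivial, sub_mulVec, smul_mulVec, one_mulVec, dotProduct_sub,
      dotProduct_smul, smul_eq_mul, hx, sub_self]
  rw [sub_mulVec, smul_mulVec, one_mulVec, sub_eq_zero] at this
  exact this.symm

lemma exists_pos_dotProduct_mulVec_eq_specRadius [Nonempty n] (hA : A.IsHermitian)
    (hpos : ∀ i j, i ≠ j → 0 < A i j) :
    ∃ x : n → ℝ, (∀ i, 0 < x i) ∧ x ⬝ᵥ x = 1 ∧ x ⬝ᵥ (A *ᵥ x) = specRadius A := by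
  obtain ⟨j, hj⟩ := hA.exists_eigenvalues_eq_specRadius
  set w : n → ℝ := ⇑(hA.eigenvectorBasis j)
  have hww : w ⬝ᵥ w = 1 := by
    have := real_inner_self_eq_norm_sq (hA.eigenvectorBasis j)
    rwa [hA.eigenvectorBasis.orthonormal.1 j, one_pow] at this
  have hwAw : w ⬝ᵥ (A *ᵥ w) = specRadius A := by
    rw [hA.mulVec_eigenvectorBasis j, dotProduct_smul, hww, hj, smul_eq_mul, mul_one]
  set x : n → ℝ := fun i => |w i|
  have hxx : x ⬝ᵥ x = 1 := by simpa [x, dotProduct, abs_mul_abs_self] using hww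
  -- Replacing `w` by `|w|` can only increase the quadratic form, as `A` is off-diagonally positive.
  have hge : specRadius A ≤ x ⬝ᵥ (A *ᵥ x) := by
    rw [← hwAw, dotProduct_mulVec_eq_sum_sum, dotProduct_mulVec_eq_sum_sum]
    refine Finset.sum_le_sum fun i _ => Finset.sum_le_sum fun k _ => ?_
    rcases eq_or_ne i k with rfl | hik
    · simp [x, mul_assoc, abs_mul_abs_self]
    · calc A i k * w i * w k ≤ |A i k * w i * w k| := le_abs_self _
        _ = A i k * x i * x k := by simp [x, abs_mul, abs_of_pos (hpos i k hik)]
  have hle := hA.dotProduct_mulVec_le_specRadius_mul x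
  rw [hxx, mul_one] at hle
  have heq : x ⬝ᵥ (A *ᵥ x) = specRadius A := le_antisymm hle hge
  have hAx : A *ᵥ x = specRadius A • x :=
    hA.mulVec_eq_specRadius_smul_of_dotProduct_mulVec_eq (by rw [heq, hxx, mul_one])
  have hx0 : x ≠ 0 := by
    rintro h
    rw [h, zero_dotProduct] at hxx
    exact zero_ne_one hxx
  exact ⟨x, pos_of_mulVec_eq_smul hpos hAx (fun i => abs_nonneg _) hx0, hxx, heq⟩

lemma specRadius_lt_specRadius_of_le_of_lt (hA : A.IsHermitian) (hB : B.IsHermitian)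
    (hpos : ∀ i j, i ≠ j → 0 < A i j) (hle : ∀ i j, A i j ≤ B i j) {u v : n}
    (hlt : A u v < B u v) : specRadius A < specRadius B := by
  have : Nonempty n := ⟨u⟩
  obtain ⟨x, hx, hxx, hxAx⟩ := hA.exists_pos_dotProduct_mulVec_eq_specRadius hpos
  calc specRadius A = x ⬝ᵥ (A *ᵥ x) := hxAx.symm
    _ < x ⬝ᵥ (B *ᵥ x) := dotProduct_mulVec_lt_of_le_of_lt hx hle hlt
    _ ≤ specRadius B * (x ⬝ᵥ x) := hB.dotProduct_mulVec_le_specRadius_mul x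
    _ = specRadius B := by rw [hxx, mul_one]

end IsHermitian

end Matrix

section ReciprocalDistance

variable {V : Type*} {G G' : SimpleGraph V} {α : ℝ}

lemma one_div_dist_le_of_le (hG : G.Connected) (hle : G ≤ G') {i j : V} (h : i ≠ j) :
    (1 : ℝ) / G.dist i j ≤ 1 / G'.dist i j := by
  apply one_div_le_one_div_of_le
  · exact_mod_cast (hG.mono hle).pos_dist_of_ne h
  · exact_mod_cast (hG.preconnected i j).dist_anti hle

variable [Fintype V] [DecidableEq V]

lemma RDalpha_apply_self (G : SimpleGraph V) (α : ℝ) (i : V) :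
    RDalpha G α i i = α * RTr G i := by
  simp [RDalpha, RDmat]

lemma RDalpha_apply_of_ne (G : SimpleGraph V) (α : ℝ) {i j : V} (h : i ≠ j) :
    RDalpha G α i j = (1 - α) * (1 / G.dist i j) := by
  simp [RDalpha, RDmat, h]

lemma isHermitian_RDalpha (G : SimpleGraph V) (α : ℝ) : (RDalpha G α).IsHermitian := by
  refine Matrix.IsHermitian.ext fun i j => ?_
  rcases eq_or_ne i j with rfl | h
  · rfl
  · rw [star_trivial, RDalpha_apply_of_ne G α h, RDalpha_apply_of_ne G α h.symm,
      SimpleGraph.dist_comm]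

lemma RDalpha_pos_of_ne (hG : G.Connected) (hα : α < 1) {i j : V} (h : i ≠ j) :
    0 < RDalpha G α i j := by
  have : (0 : ℝ) < G.dist i j := by exact_mod_cast hG.pos_dist_of_ne h
  rw [RDalpha_apply_of_ne G α h]
  exact mul_pos (sub_pos.mpr hα) (one_div_pos.mpr this)

lemma RTr_le_of_le (hG : G.Connected) (hle : G ≤ G') (v : V) : RTr G v ≤ RTr G' v :=
  Finset.sum_le_sum fun _ hu => one_div_dist_le_of_le hG hle (Finset.ne_of_mem_erase hu)

lemma RDalpha_le_of_le (hG : G.Connected) (hle : G ≤ G') (hα0 : 0 ≤ α) (hα1 : α ≤ 1)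
    (i j : V) : RDalpha G α i j ≤ RDalpha G' α i j := by
  rcases eq_or_ne i j with rfl | h
  · rw [RDalpha_apply_self, RDalpha_apply_self]
    exact mul_le_mul_of_nonneg_left (RTr_le_of_le hG hle i) hα0
  · rw [RDalpha_apply_of_ne G α h, RDalpha_apply_of_ne G' α h]
    exact mul_le_mul_of_nonneg_left (one_div_dist_le_of_le hG hle h) (sub_nonneg.mpr hα1)

lemma RDalpha_lt_of_adj_of_not_adj (hG : G.Connected) (hα : α < 1) {u v : V} (hadj : G'.Adj u v)
    (hnadj : ¬G.Adj u v) : RDalpha G α u v < RDalpha G' α u v := by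
  have huv : u ≠ v := hadj.ne
  have hd : 1 < G.dist u v := by
    have := hG.pos_dist_of_ne huv
    have := mt SimpleGraph.dist_eq_one_iff_adj.mp hnadj
    omega
  rw [RDalpha_apply_of_ne G α huv, RDalpha_apply_of_ne G' α huv,
    SimpleGraph.dist_eq_one_iff_adj.mpr hadj]
  refine mul_lt_mul_of_pos_left ?_ (sub_pos.mpr hα)
  rw [Nat.cast_one, div_one, div_lt_one (by positivity)]
  exact_mod_cast hd

end ReciprocalDistance

/-- Proposition 3.3: for `0 ≤ α < 1`, adding an edge strictly increases the spectral radius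
of `RD_α`. -/
theorem stmt6 {V : Type*} [Fintype V] [DecidableEq V] (G : SimpleGraph V) (hG : G.Connected)
    (u v : V) (huv : u ≠ v) (he : ¬ G.Adj u v)
    (α : ℝ) (hα0 : 0 ≤ α) (hα1 : α < 1) :
    specRadius (RDalpha (G ⊔ SimpleGraph.fromEdgeSet {s(u, v)}) α) >
      specRadius (RDalpha G α) := by
  have hle : G ≤ G ⊔ SimpleGraph.fromEdgeSet {s(u, v)} := le_sup_left
  have hadj : (G ⊔ SimpleGraph.fromEdgeSet {s(u, v)}).Adj u v :=
    Or.inr ⟨Set.mem_singleton _, huv⟩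
  exact (isHermitian_RDalpha G α).specRadius_lt_specRadius_of_le_of_lt (isHermitian_RDalpha _ α)
    (fun _ _ => RDalpha_pos_of_ne hG hα1) (RDalpha_le_of_le hG hle hα0 hα1.le)
    (RDalpha_lt_of_adj_of_not_adj hG hα1 hadj he)
end

section
/- Let K_{a,n−a} be the complete bipartite graph of order n ≥ 4 with 1 ≤ a ≤ ⌊n/2⌋, and let α ∈ [0,1]. Then RD_α(K_{a,n−a}) is positive semidefinite if and only if α ≥ α₀, where α₀ = (n − 1 + 3a(n−a)) / (2n(n−1) + 4a(n−a)). -/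
open Matrix BigOperators Finset

/-!
On `K_{a,b}` (`b = n - a`) vertices in the same part are at distance 2 and vertices in different
parts at distance 1, so `RD_α` is `c₁ I + d J` and `c₂ I + d J` on the two parts and `(1 - α) J`
between them, with `d = (1 - α) / 2`. Testing block-constant vectors shows that positive
semidefiniteness forces the 2 × 2 quotient matrix `[[c₁ + a d, b (1 - α)], [a (1 - α), c₂ + b d]]`
to have nonnegative determinant. Conversely, when also `c₁, c₂ ≥ 0`, Cauchy–Schwarz
`(∑ yᵢ)² ≤ a ∑ yᵢ²` bounds the quadratic form below by the binary form of that quotient matrix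
in the block sums. The determinant condition is linear in `α` (the `α²` terms cancel) and reads
`α ≥ α₀`, which also gives `c₁, c₂ ≥ 0`.
-/

lemma quadratic_nonneg_of_sq_le_mul {p q r : ℝ} (hp : 0 ≤ p) (hr : 0 ≤ r) (h : q ^ 2 ≤ p * r)
    (s t : ℝ) : 0 ≤ p * s ^ 2 + 2 * q * s * t + r * t ^ 2 := by
  rcases hp.eq_or_lt with rfl | hp
  · obtain rfl : q = 0 := by nlinarith
    simp only [zero_mul, mul_zero, zero_add]
    positivity
  · have hsq : p * (p * s ^ 2 + 2 * q * s * t + r * t ^ 2)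
        = (p * s + q * t) ^ 2 + (p * r - q ^ 2) * t ^ 2 := by ring
    have : 0 ≤ p * (p * s ^ 2 + 2 * q * s * t + r * t ^ 2) := by
      rw [hsq]
      exact add_nonneg (sq_nonneg _) (mul_nonneg (sub_nonneg.2 h) (sq_nonneg t))
    exact nonneg_of_mul_nonneg_right this hp

section BipartiteBlockMatrix

variable {ι κ : Type*} [DecidableEq ι] [DecidableEq κ]

def bipartiteBlockMatrix (c₁ c₂ d r : ℝ) : Matrix (ι ⊕ κ) (ι ⊕ κ) ℝ :=
  fromBlocks (c₁ • 1 + d • of fun _ _ => 1) (of fun _ _ => r) (of fun _ _ => r)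
    (c₂ • 1 + d • of fun _ _ => 1)

variable (c₁ c₂ d r : ℝ)

lemma isHermitian_bipartiteBlockMatrix :
    (bipartiteBlockMatrix c₁ c₂ d r : Matrix (ι ⊕ κ) (ι ⊕ κ) ℝ).IsHermitian := by
  refine IsHermitian.fromBlocks ?_ ?_ ?_ <;> ext <;> simp [one_apply, eq_comm]

variable [Fintype ι] [Fintype κ]

lemma sum_elim_dotProduct_bipartiteBlockMatrix_mulVec (y : ι → ℝ) (z : κ → ℝ) :
    Sum.elim y z ⬝ᵥ bipartiteBlockMatrix c₁ c₂ d r *ᵥ Sum.elim y z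
      = c₁ * ∑ i, y i ^ 2 + c₂ * ∑ j, z j ^ 2 + d * ((∑ i, y i) ^ 2 + (∑ j, z j) ^ 2)
        + 2 * r * (∑ i, y i) * ∑ j, z j := by
  simp only [bipartiteBlockMatrix, fromBlocks_mulVec, Sum.elim_comp_inl, Sum.elim_comp_inr,
    add_mulVec, smul_mulVec, one_mulVec]
  simp only [dotProduct, mulVec, Fintype.sum_sum_type, Sum.elim_inl,
    Sum.elim_inr, Pi.add_apply, Pi.smul_apply, smul_eq_mul, of_apply, one_mul, mul_add,
    Finset.sum_add_distrib, ← Finset.sum_mul, ← Finset.mul_sum, mul_left_comm _ c₁,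
    mul_left_comm _ c₂, ← sq]
  ring

lemma Matrix.PosSemidef.card_mul_card_mul_sq_le_of_bipartiteBlockMatrix [Nonempty ι]
    [Nonempty κ] (hM : (bipartiteBlockMatrix c₁ c₂ d r : Matrix (ι ⊕ κ) (ι ⊕ κ) ℝ).PosSemidef) :
    Fintype.card ι * Fintype.card κ * r ^ 2
      ≤ (c₁ + Fintype.card ι * d) * (c₂ + Fintype.card κ * d) := by
  set a : ℝ := (Fintype.card ι : ℝ)
  set b : ℝ := (Fintype.card κ : ℝ)
  have hform (s : ℝ) :
      0 ≤ a * (c₁ + a * d) * (s * s) + 2 * a * b * r * s + b * (c₂ + b * d) := by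
    have := hM.dotProduct_mulVec_nonneg (Sum.elim (fun _ => s) fun _ => 1)
    simp only [star_trivial, sum_elim_dotProduct_bipartiteBlockMatrix_mulVec, Finset.sum_const,
      Finset.card_univ, nsmul_eq_mul, one_pow, mul_one] at this
    linear_combination this
  have hdiscr := discrim_le_zero hform
  rw [discrim] at hdiscr
  have key : a * b * (a * b * r ^ 2) ≤ a * b * ((c₁ + a * d) * (c₂ + b * d)) := by
    linear_combination hdiscr / 4
  exact le_of_mul_le_mul_left key (by positivity)

lemma posSemidef_bipartiteBlockMatrix [Nonempty ι] [Nonempty κ] (hc₁ : 0 ≤ c₁) (hc₂ : 0 ≤ c₂)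
    (hu : 0 ≤ c₁ + Fintype.card ι * d) (hv : 0 ≤ c₂ + Fintype.card κ * d)
    (hdet : Fintype.card ι * Fintype.card κ * r ^ 2
      ≤ (c₁ + Fintype.card ι * d) * (c₂ + Fintype.card κ * d)) :
    (bipartiteBlockMatrix c₁ c₂ d r : Matrix (ι ⊕ κ) (ι ⊕ κ) ℝ).PosSemidef := by
  refine posSemidef_iff_dotProduct_mulVec.2 ⟨isHermitian_bipartiteBlockMatrix .., fun x => ?_⟩
  rw [star_trivial, ← Sum.elim_comp_inl_inr x, sum_elim_dotProduct_bipartiteBlockMatrix_mulVec]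
  set a : ℝ := (Fintype.card ι : ℝ)
  set b : ℝ := (Fintype.card κ : ℝ)
  set S := ∑ i, (x ∘ Sum.inl) i
  set T := ∑ j, (x ∘ Sum.inr) j
  have ha : 0 < a := by positivity
  have hb : 0 < b := by positivity
  have hS : S ^ 2 ≤ a * ∑ i, (x ∘ Sum.inl) i ^ 2 := sq_sum_le_card_mul_sum_sq
  have hT : T ^ 2 ≤ b * ∑ j, (x ∘ Sum.inr) j ^ 2 := sq_sum_le_card_mul_sum_sq
  have hST := quadratic_nonneg_of_sq_le_mul (p := b * (c₁ + a * d)) (q := a * b * r)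
    (r := a * (c₂ + b * d)) (by positivity) (by positivity) (by linear_combination a * b * hdet) S T
  have : 0 ≤ a * b * (c₁ * ∑ i, (x ∘ Sum.inl) i ^ 2 + c₂ * ∑ j, (x ∘ Sum.inr) j ^ 2
      + d * (S ^ 2 + T ^ 2) + 2 * r * S * T) := by
    linear_combination hST + mul_nonneg (mul_nonneg hb.le hc₁) (sub_nonneg.2 hS)
      + mul_nonneg (mul_nonneg ha.le hc₂) (sub_nonneg.2 hT)
  exact nonneg_of_mul_nonneg_right this (by positivity)

end BipartiteBlockMatrix

noncomputable def psdThreshold (a b : ℝ) : ℝ :=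
  (a + b - 1 + 3 * a * b) / (2 * (a + b) * (a + b - 1) + 4 * a * b)

section PsdThreshold

variable {a b : ℝ}

lemma psdThreshold_comm (a b : ℝ) : psdThreshold a b = psdThreshold b a := by
  unfold psdThreshold
  congr 1 <;> ring

lemma psdThreshold_le_iff (ha : 1 ≤ a) (hb : 1 ≤ b) (α : ℝ) :
    psdThreshold a b ≤ α ↔ a * b * (1 - α) ^ 2 ≤ ((a - 1) / 2 + α * b) * ((b - 1) / 2 + α * a) := by
  rw [psdThreshold, div_le_iff₀ (by nlinarith)]
  constructor <;> intro h
  · linear_combination h / 4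
  · linear_combination 4 * h

lemma one_le_mul_of_psdThreshold_le (ha : 1 ≤ a) (hb : 1 ≤ b) {α : ℝ}
    (h : psdThreshold a b ≤ α) : 1 ≤ α * (a + 2 * b) := by
  have hD : 0 < 2 * (a + b) * (a + b - 1) + 4 * a * b := by nlinarith
  rw [psdThreshold, div_le_iff₀ hD] at h
  have hN : 2 * (a + b) * (a + b - 1) + 4 * a * b ≤ (a + b - 1 + 3 * a * b) * (a + 2 * b) := by
    nlinarith [mul_nonneg (sq_nonneg a) (by linarith : (0 : ℝ) ≤ 3 * b - 1),
      mul_nonneg (mul_nonneg (by linarith : (0 : ℝ) ≤ a) (by linarith : (0 : ℝ) ≤ b))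
        (by linarith : (0 : ℝ) ≤ 6 * b - 5)]
  nlinarith [mul_le_mul_of_nonneg_right h (by linarith : (0 : ℝ) ≤ a + 2 * b)]

end PsdThreshold

namespace SimpleGraph

variable {V W : Type*}

lemma dist_eq_two_of_mem_commonNeighbors {G : SimpleGraph V} {u v w : V} (huv : u ≠ v)
    (hadj : ¬G.Adj u v) (hw : w ∈ G.commonNeighbors u v) : G.dist u v = 2 := by
  rw [dist, edist_eq_two_iff.mpr ⟨huv, hadj, w, hw⟩]
  rfl

@[simp]
lemma completeBipartiteGraph_dist_inl_inr (v : V) (w : W) :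
    (completeBipartiteGraph V W).dist (.inl v) (.inr w) = 1 := by
  simp [dist_eq_one_iff_adj]

@[simp]
lemma completeBipartiteGraph_dist_inr_inl (v : V) (w : W) :
    (completeBipartiteGraph V W).dist (.inr w) (.inl v) = 1 := by
  simp [dist_eq_one_iff_adj]

lemma completeBipartiteGraph_dist_inl_inl [Nonempty W] {v v' : V} (h : v ≠ v') :
    (completeBipartiteGraph V W).dist (.inl v) (.inl v') = 2 :=
  dist_eq_two_of_mem_commonNeighbors (by simpa) (by simp)
    (w := .inr (Classical.arbitrary W)) (by simp [mem_commonNeighbors])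

lemma completeBipartiteGraph_dist_inr_inr [Nonempty V] {w w' : W} (h : w ≠ w') :
    (completeBipartiteGraph V W).dist (.inr w) (.inr w') = 2 :=
  dist_eq_two_of_mem_commonNeighbors (by simpa) (by simp)
    (w := .inl (Classical.arbitrary V)) (by simp [mem_commonNeighbors])

end SimpleGraph

open SimpleGraph

lemma sum_ite_eq_zero_else {ι : Type*} [Fintype ι] [DecidableEq ι] (i : ι) (c : ℝ) :
    ∑ j, (if j = i then 0 else c) = (Fintype.card ι - 1) * c := by
  have : 1 ≤ Fintype.card ι := Fintype.card_pos_iff.mpr ⟨i⟩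
  simp [Finset.sum_ite, Finset.filter_ne', Finset.card_erase_of_mem, Nat.cast_sub this]

-- The term `u = v` is `1 / 0 = 0` in Lean, so the sum may run over all vertices.
lemma RTr_eq_sum {V : Type*} [Fintype V] [DecidableEq V] (G : SimpleGraph V) (v : V) :
    RTr G v = ∑ u, 1 / (G.dist u v : ℝ) :=
  Finset.sum_erase _ (by simp)

lemma RDalpha_apply {V : Type*} [Fintype V] [DecidableEq V] (G : SimpleGraph V) (α : ℝ)
    (u v : V) : RDalpha G α u v = if u = v then α * RTr G u else (1 - α) / G.dist u v := by
  by_cases h : u = v <;> simp [RDalpha, RDmat, h, div_eq_mul_inv]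

section CompleteBipartite

variable {V W : Type*} [Fintype V] [Fintype W] [DecidableEq V] [DecidableEq W]

lemma RTr_completeBipartiteGraph_inl [Nonempty W] (v : V) :
    RTr (completeBipartiteGraph V W) (.inl v) = (Fintype.card V - 1) / 2 + Fintype.card W := by
  have h (v' : V) : 1 / ((completeBipartiteGraph V W).dist (.inl v') (.inl v) : ℝ)
      = if v' = v then 0 else 1 / 2 := by
    split_ifs with hv
    · simp [hv]
    · simp [completeBipartiteGraph_dist_inl_inl hv]
  rw [RTr_eq_sum, Fintype.sum_sum_type, Finset.sum_congr rfl fun v' _ => h v',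
    sum_ite_eq_zero_else]
  simp only [completeBipartiteGraph_dist_inr_inl, Nat.cast_one, div_one, Finset.sum_const,
    Finset.card_univ, nsmul_eq_mul, mul_one]
  ring

lemma RTr_completeBipartiteGraph_inr [Nonempty V] (w : W) :
    RTr (completeBipartiteGraph V W) (.inr w) = (Fintype.card W - 1) / 2 + Fintype.card V := by
  have h (w' : W) : 1 / ((completeBipartiteGraph V W).dist (.inr w') (.inr w) : ℝ)
      = if w' = w then 0 else 1 / 2 := by
    split_ifs with hw
    · simp [hw]
    · simp [completeBipartiteGraph_dist_inr_inr hw]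
  rw [RTr_eq_sum, Fintype.sum_sum_type, Finset.sum_congr rfl fun w' _ => h w',
    sum_ite_eq_zero_else]
  simp only [completeBipartiteGraph_dist_inl_inr, Nat.cast_one, div_one, Finset.sum_const,
    Finset.card_univ, nsmul_eq_mul, mul_one]
  ring

lemma RDalpha_completeBipartiteGraph [Nonempty V] [Nonempty W] (α : ℝ) :
    RDalpha (completeBipartiteGraph V W) α =
      bipartiteBlockMatrix (α * ((Fintype.card V - 1) / 2 + Fintype.card W) - (1 - α) / 2)
        (α * ((Fintype.card W - 1) / 2 + Fintype.card V) - (1 - α) / 2) ((1 - α) / 2) (1 - α) := by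
  ext (v | w) (v' | w')
  · by_cases h : v = v'
    · simp [RDalpha_apply, bipartiteBlockMatrix, h, RTr_completeBipartiteGraph_inl]
    · simp [RDalpha_apply, bipartiteBlockMatrix, one_apply, h, completeBipartiteGraph_dist_inl_inl]
  · simp [RDalpha_apply, bipartiteBlockMatrix]
  · simp [RDalpha_apply, bipartiteBlockMatrix]
  · by_cases h : w = w'
    · simp [RDalpha_apply, bipartiteBlockMatrix, h, RTr_completeBipartiteGraph_inr]
    · simp [RDalpha_apply, bipartiteBlockMatrix, one_apply, h, completeBipartiteGraph_dist_inr_inr]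

end CompleteBipartite

theorem stmt13_general (n a : ℕ) (ha1 : 1 ≤ a) (ha2 : a ≤ n / 2)
    (α : ℝ) :
    (RDalpha (completeBipartiteGraph (Fin a) (Fin (n - a))) α).PosSemidef ↔
      ((n : ℝ) - 1 + 3 * a * ((n : ℝ) - a)) /
        (2 * n * ((n : ℝ) - 1) + 4 * a * ((n : ℝ) - a)) ≤ α := by
  obtain ⟨b, rfl⟩ : ∃ b, n = a + b := ⟨n - a, by omega⟩
  have hb1 : 1 ≤ b := by omega
  have : Nonempty (Fin a) := ⟨⟨0, ha1⟩⟩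
  have : Nonempty (Fin b) := ⟨⟨0, hb1⟩⟩
  have ha : (1 : ℝ) ≤ a := by exact_mod_cast ha1
  have hb : (1 : ℝ) ≤ b := by exact_mod_cast hb1
  rw [Nat.add_sub_cancel_left, RDalpha_completeBipartiteGraph, Nat.cast_add, add_sub_cancel_left]
  change _ ↔ psdThreshold a b ≤ α
  constructor
  · intro h
    have hdet := h.card_mul_card_mul_sq_le_of_bipartiteBlockMatrix
    simp only [Fintype.card_fin] at hdet
    exact (psdThreshold_le_iff ha hb α).2 (by linear_combination hdet)
  · intro h
    have hdet := (psdThreshold_le_iff ha hb α).1 h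
    have h₁ := one_le_mul_of_psdThreshold_le ha hb h
    have h₂ := one_le_mul_of_psdThreshold_le hb ha ((psdThreshold_comm b a).trans_le h)
    have hα : 0 ≤ α := by nlinarith
    apply posSemidef_bipartiteBlockMatrix <;> simp only [Fintype.card_fin]
    · linarith
    · linarith
    · nlinarith
    · nlinarith
    · linear_combination hdet

/-- Theorem 3.11: `RD_α(K_{a,n-a})` is positive semidefinite iff `α ≥ α₀`, where
`α₀ = (n - 1 + 3a(n-a)) / (2n(n-1) + 4a(n-a))`. -/
theorem stmt13 (n a : ℕ) (hn : 4 ≤ n) (ha1 : 1 ≤ a) (ha2 : a ≤ n / 2)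
    (α : ℝ) (hα : α ∈ Set.Icc (0 : ℝ) 1) :
    (RDalpha (completeBipartiteGraph (Fin a) (Fin (n - a))) α).PosSemidef ↔
      ((n : ℝ) - 1 + 3 * a * ((n : ℝ) - a)) /
        (2 * n * ((n : ℝ) - 1) + 4 * a * ((n : ℝ) - a)) ≤ α :=
  stmt13_general n a ha1 ha2 α
end
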